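/- arXiv:2009.02770 — 7 statements merged into one kernel-verified Lean document; each statement's English description precedes it below -/
import Mathlib

section
/- For all positive integers r and k with k ≤ r, the Fibonacci number F_{gcd(k+1, r+2)} divides F_{k+1}·F_{r-k+2} − F_k·F_{r-k+1}. -/
theorem stmt_0 (r k : ℕ) (hr : 0 < r) (hk : 0 < k) (hkr : k ≤ r) :
    (Nat.fib (Nat.gcd (k + 1) (r + 2)) : ℤ) ∣
      (Nat.fib (k + 1) * Nat.fib (r - k + 2) : ℤ) - Nat.fib k * Nat.fib (r - k + 1) := by
  have hsum : Nat.fib (r + 2) =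
      Nat.fib k * Nat.fib (r - k + 1) + Nat.fib (k + 1) * Nat.fib (r - k + 2) := by
    have h : k + (r - k + 1) + 1 = r + 2 := by omega
    rw [← h, Nat.fib_add]
  have h1 : (Nat.fib (Nat.gcd (k + 1) (r + 2)) : ℤ) ∣ Nat.fib (k + 1) :=
    Int.natCast_dvd_natCast.mpr (Nat.fib_dvd _ _ (Nat.gcd_dvd_left _ _))
  have h2 : (Nat.fib (Nat.gcd (k + 1) (r + 2)) : ℤ) ∣ Nat.fib (r + 2) :=
    Int.natCast_dvd_natCast.mpr (Nat.fib_dvd _ _ (Nat.gcd_dvd_right _ _))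
  have key : (Nat.fib (k + 1) * Nat.fib (r - k + 2) : ℤ) - Nat.fib k * Nat.fib (r - k + 1)
      = 2 * (Nat.fib (k + 1) * Nat.fib (r - k + 2)) - Nat.fib (r + 2) := by
    have := congrArg (fun n : ℕ => (n : ℤ)) hsum
    push_cast at this ⊢
    linarith
  rw [key]
  exact dvd_sub (Dvd.dvd.mul_left (h1.mul_right _) 2) h2
end

section
/- For all positive integers r and k with k ≤ r, the Fibonacci number F_{gcd(k, r+2)} divides F_{k+1}·F_{r-k+2} − F_k·F_{r-k+1}. -/
theorem stmt_1 (r k : ℕ) (hr : 0 < r) (hk : 0 < k) (hkr : k ≤ r) :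
    (Nat.fib (Nat.gcd k (r + 2)) : ℤ) ∣
      (Nat.fib (k + 1) * Nat.fib (r - k + 2) : ℤ) - Nat.fib k * Nat.fib (r - k + 1) := by
  have hds : Nat.gcd k (r + 2) ∣ r - k + 2 := by
    have : r - k + 2 = (r + 2) - k := by omega
    rw [this]
    exact Nat.dvd_sub (Nat.gcd_dvd_right _ _) (Nat.gcd_dvd_left _ _)
  have h1 : (Nat.fib (Nat.gcd k (r + 2)) : ℤ) ∣ Nat.fib (r - k + 2) :=
    Int.natCast_dvd_natCast.mpr (Nat.fib_dvd _ _ hds)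
  have h2 : (Nat.fib (Nat.gcd k (r + 2)) : ℤ) ∣ Nat.fib k :=
    Int.natCast_dvd_natCast.mpr (Nat.fib_dvd _ _ (Nat.gcd_dvd_left _ _))
  exact dvd_sub (Dvd.dvd.mul_left h1 _) (Dvd.dvd.mul_right h2 _)
end

section
/- The gcd of F_{k+1}·F_{r-k+2} and F_k·F_{r-k+1} equals F_{gcd(k+1, r+2)}·F_{gcd(k, r+2)}, for positive integers r, k with k ≤ r. -/
/-!
Since consecutive Fibonacci numbers are coprime, `F_{k+1} ⊥ F_k` and `F_{r-k+2} ⊥ F_{r-k+1}`, so the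
gcd of the two products splits as `gcd(F_{k+1}, F_{r-k+1}) · gcd(F_{r-k+2}, F_k)`. By
`gcd(F_a, F_b) = F_{gcd(a,b)}` these are `F_{gcd(k+1, r-k+1)}` and `F_{gcd(k, r-k+2)}`, and subtracting
the first index from the second leaves the gcds unchanged: `gcd(a, n - a) = gcd(a, n)` with `n = r + 2`.
-/

namespace Nat

theorem gcd_mul_mul_of_coprime {a b c d : ℕ} (hac : Coprime a c) (hbd : Coprime b d) :
    gcd (a * b) (c * d) = gcd a d * gcd b c := by
  apply dvd_antisymm
  · have h : gcd (a * b) (c * d) ∣ gcd (a * b) c * gcd (a * b) d :=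
      gcd_mul_dvd_mul_gcd (a * b) c d
    rwa [hac.gcd_mul_left_cancel b, hbd.gcd_mul_right_cancel a, mul_comm (gcd b c)] at h
  · refine dvd_gcd (mul_dvd_mul (gcd_dvd_left a d) (gcd_dvd_left b c)) ?_
    rw [mul_comm c d]
    exact mul_dvd_mul (gcd_dvd_right a d) (gcd_dvd_right b c)

theorem gcd_fib_fib_sub {a n : ℕ} (h : a ≤ n) : gcd (fib a) (fib (n - a)) = fib (gcd a n) := by
  rw [← fib_gcd, gcd_sub_self_right h]

end Nat

theorem stmt_4_general (r k : ℕ) (hkr : k ≤ r) :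
    Nat.gcd (Nat.fib (k + 1) * Nat.fib (r - k + 2)) (Nat.fib k * Nat.fib (r - k + 1)) =
      Nat.fib (Nat.gcd (k + 1) (r + 2)) * Nat.fib (Nat.gcd k (r + 2)) := by
  have hk : Nat.Coprime (Nat.fib (k + 1)) (Nat.fib k) := (Nat.fib_coprime_fib_succ k).symm
  have hrk : Nat.Coprime (Nat.fib (r - k + 2)) (Nat.fib (r - k + 1)) :=
    (Nat.fib_coprime_fib_succ (r - k + 1)).symm
  rw [Nat.gcd_mul_mul_of_coprime hk hrk, Nat.gcd_comm (Nat.fib (r - k + 2)),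
    show r - k + 1 = r + 2 - (k + 1) by omega, show r - k + 2 = r + 2 - k by omega,
    Nat.gcd_fib_fib_sub (by omega), Nat.gcd_fib_fib_sub (by omega)]

theorem stmt_4 (r k : ℕ) (hr : 0 < r) (hk : 0 < k) (hkr : k ≤ r) :
    Nat.gcd (Nat.fib (k + 1) * Nat.fib (r - k + 2)) (Nat.fib k * Nat.fib (r - k + 1)) =
      Nat.fib (Nat.gcd (k + 1) (r + 2)) * Nat.fib (Nat.gcd k (r + 2)) :=
  stmt_4_general r k hkr
end

section
/- For every positive integer t, the polynomial x² + (1−t)x − 2t² ∈ ℤ[x] has no integer root. -/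
theorem stmt_5 (t : ℕ) (ht : 0 < t) :
    ∀ x : ℤ, x ^ 2 + (1 - (t : ℤ)) * x - 2 * (t : ℤ) ^ 2 ≠ 0 := by
  intro x h
  have hT : (1 : ℤ) ≤ (t : ℤ) := by exact_mod_cast ht
  set T : ℤ := (t : ℤ)
  set y : ℤ := 2 * x + 1 - T with hy
  have hsq : y ^ 2 = 9 * T ^ 2 - 2 * T + 1 := by
    rw [hy]; linear_combination 4 * h
  have h1 : y ^ 2 < (3 * T) ^ 2 := by nlinarith
  have h2 : (3 * T - 1) ^ 2 < y ^ 2 := by nlinarith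
  have hu : y ≤ 3 * T - 1 := by nlinarith
  have hl : 1 - 3 * T ≤ y := by nlinarith
  nlinarith [mul_nonneg (by linarith : (0:ℤ) ≤ 3 * T - 1 - y) (by linarith : (0:ℤ) ≤ 3 * T - 1 + y)]
end

section
/- For every positive integer t, the polynomial x³ + (1−2t)x² − (t²+4t+1)x + (2t³+2t²−t−1) ∈ ℤ[x] has no integer root. -/
theorem stmt_6 (t : ℕ) (ht : 0 < t) :
    ∀ x : ℤ, x ^ 3 + (1 - 2 * (t : ℤ)) * x ^ 2 - ((t : ℤ) ^ 2 + 4 * t + 1) * x +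
      (2 * (t : ℤ) ^ 3 + 2 * t ^ 2 - t - 1) ≠ 0 := by
  intro x hx
  have hT : (1 : ℤ) ≤ (t : ℤ) := by exact_mod_cast ht
  set T : ℤ := (t : ℤ) with hTdef
  rcases le_or_gt x (-(T + 2)) with h1 | h1
  · -- x ≤ -T-2 : f(x) < 0
    nlinarith [sq_nonneg (x + T + 2), sq_nonneg x, sq_nonneg (x + T),
      mul_nonneg (mul_nonneg (by linarith : (0:ℤ) ≤ -(x + T + 2)) (by linarith : (0:ℤ) ≤ -(x + T + 2))) (by linarith : (0:ℤ) ≤ -x),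
      mul_nonneg (by linarith : (0:ℤ) ≤ -(x + T + 2)) (by linarith : (0:ℤ) ≤ T - 1)]
  · rcases le_or_gt x (T - 1) with h2 | h2
    · -- -T-1 ≤ x ≤ T-1 : f(x) > 0
      have h1' : -(T + 1) ≤ x := by omega
      nlinarith [mul_nonneg (by linarith : (0:ℤ) ≤ x + T + 1) (by linarith : (0:ℤ) ≤ T - 1 - x),
        mul_nonneg (mul_nonneg (by linarith : (0:ℤ) ≤ x + T + 1) (by linarith : (0:ℤ) ≤ T - 1 - x)) (by linarith : (0:ℤ) ≤ T - 1 - x),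
        mul_nonneg (mul_nonneg (by linarith : (0:ℤ) ≤ x + T + 1) (by linarith : (0:ℤ) ≤ T - 1 - x)) (by linarith : (0:ℤ) ≤ x + T + 1),
        sq_nonneg (x + 1), sq_nonneg x]
    · rcases eq_or_lt_of_le (by omega : T ≤ x) with h3 | h3
      · -- x = T : f = -(T+1)^2 < 0
        rw [← h3] at hx
        nlinarith [sq_nonneg (T + 1)]
      · rcases le_or_gt x (2 * T) with h4 | h4
        · -- T+1 ≤ x ≤ 2T : f(x) < 0
          have h3' : T + 1 ≤ x := by omega
          nlinarith [mul_nonneg (by linarith : (0:ℤ) ≤ x - T - 1) (by linarith : (0:ℤ) ≤ 2 * T - x),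
            mul_nonneg (mul_nonneg (by linarith : (0:ℤ) ≤ x - T - 1) (by linarith : (0:ℤ) ≤ 2 * T - x)) (by linarith : (0:ℤ) ≤ x - T - 1),
            mul_nonneg (mul_nonneg (by linarith : (0:ℤ) ≤ x - T - 1) (by linarith : (0:ℤ) ≤ 2 * T - x)) (by linarith : (0:ℤ) ≤ 2 * T - x),
            sq_nonneg (x - T)]
        · -- x ≥ 2T+1 : f(x) > 0
          have h4' : 2 * T + 1 ≤ x := by omega
          nlinarith [mul_nonneg (mul_nonneg (by linarith : (0:ℤ) ≤ x - 2 * T - 1) (by linarith : (0:ℤ) ≤ x - 2 * T - 1)) (by linarith : (0:ℤ) ≤ x - 2 * T - 1),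
            mul_nonneg (mul_nonneg (by linarith : (0:ℤ) ≤ x - 2 * T - 1) (by linarith : (0:ℤ) ≤ x - 2 * T - 1)) (by linarith : (0:ℤ) ≤ T - 1),
            mul_nonneg (by linarith : (0:ℤ) ≤ x - 2 * T - 1) (by linarith : (0:ℤ) ≤ T - 1),
            mul_nonneg (by linarith : (0:ℤ) ≤ x - 2 * T - 1) (by linarith : (0:ℤ) ≤ x - 2 * T - 1)]
end

section
/- For every positive integer t, the polynomial x² − t·x − 2t(t+1) ∈ ℤ[x] has no integer root. -/
theorem stmt_7 (t : ℕ) (ht : 0 < t) :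
    ∀ x : ℤ, x ^ 2 - (t : ℤ) * x - 2 * t * (t + 1) ≠ 0 := by
  intro x h
  have ht' : (1 : ℤ) ≤ t := by exact_mod_cast ht
  set a : ℤ := 2*x - 4*t - 1 with ha
  set b : ℤ := 2*x + 2*t + 1 with hb
  have hab : a * b = 2*t - 1 := by rw [ha, hb]; nlinarith [h]
  have hba : b = a + 6*t + 2 := by rw [ha, hb]; ring
  rcases lt_trichotomy a 0 with h1 | h1 | h1
  · have ha1 : a ≤ -1 := by omega
    rcases le_or_gt b 0 with h2 | h2
    · -- a ≤ -1, b ≤ 0, b = a + 6t+2 ≤ 0 so a ≤ -6t-2, product = a*b ≥ ...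
      have ha2 : a ≤ -6*t - 3 := by omega
      nlinarith
    · nlinarith
  · omega
  · have ha1 : 1 ≤ a := h1
    have hb1 : 6*t + 3 ≤ b := by omega
    nlinarith
end

section
/- For every positive integer t, the polynomial x³ − (2t+1)x² − (t+1)²·x + 2t(t+1)² ∈ ℤ[x] has no integer root. -/
theorem stmt_8 (t : ℕ) (ht : 0 < t) :
    ∀ x : ℤ, x ^ 3 - (2 * (t : ℤ) + 1) * x ^ 2 - ((t : ℤ) + 1) ^ 2 * x +
      2 * t * ((t : ℤ) + 1) ^ 2 ≠ 0 := by
  intro x hx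
  have hT : (1 : ℤ) ≤ (t : ℤ) := by exact_mod_cast ht
  rcases le_or_gt x (2 * (t : ℤ) + 1) with h1 | h1
  · rcases le_or_gt (x ^ 2) ((t : ℤ) ^ 2) with h2 | h2
    · -- |x| ≤ t : P > 0
      have hx1 : x ≤ (t : ℤ) := by nlinarith [sq_nonneg (x - t)]
      nlinarith [mul_nonneg (sub_nonneg.2 h2) (by linarith : (0:ℤ) ≤ 2 * t + 1 - x)]
    · -- |x| ≥ t + 1 and x ≤ 2t+1 : P < 0
      have habs : (t : ℤ) + 1 ≤ |x| := by
        have h0 : (t : ℤ) < |x| := by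
          nlinarith [sq_abs x, abs_nonneg x]
        linarith
      have h3 : ((t : ℤ) + 1) ^ 2 ≤ x ^ 2 := by
        calc ((t : ℤ) + 1) ^ 2 ≤ |x| ^ 2 := by nlinarith [abs_nonneg x]
        _ = x ^ 2 := sq_abs x
      nlinarith [mul_nonneg (sub_nonneg.2 h3) (by linarith : (0:ℤ) ≤ 2 * t + 1 - x)]
  · -- x ≥ 2t + 2 : P > 0
    have h4 : 2 * (t : ℤ) + 2 ≤ x := by linarith
    have h5 : (2 * (t : ℤ) + 2) ^ 2 ≤ x ^ 2 := by nlinarith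
    nlinarith [mul_nonneg (sub_nonneg.2 h5) (by linarith : (0:ℤ) ≤ x - 2 * t - 1)]
end
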